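/- arXiv:1902.02283 — 3 statements merged into one kernel-verified Lean document; each statement's English description precedes it below -/
import Mathlib

section
/- Let T ∈ ℝ^{n×n} be an upper triangular matrix that is strictly row diagonally dominant (i.e., ∑_{j≠i} |t_{ij}| < |t_{ii}| for all i). Then for every pair of index sets I, J ⊆ {1,…,n} with |I| = |J| and I ≠ J, we have |det(T(I,J))| < |det(T(I,I))|. -/
open Finset Matrix

/-- Row bound used in the induction: diagonal entry if the row index is hit by the
column map, otherwise the off-diagonal absolute row sum. -/
noncomputable def uval {n m : ℕ} (T : Matrix (Fin n) (Fin n) ℝ) (γ : Fin m → Fin n)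
    (i : Fin n) : ℝ :=
  if ∃ q, γ q = i then |T i i| else ∑ j ∈ Finset.univ.erase i, |T i j|

lemma uval_nonneg {n m : ℕ} (T : Matrix (Fin n) (Fin n) ℝ) (γ : Fin m → Fin n)
    (i : Fin n) : 0 ≤ uval T γ i := by
  unfold uval; split_ifs
  · exact abs_nonneg _
  · exact Finset.sum_nonneg fun _ _ => abs_nonneg _

lemma uval_le_diag {n m : ℕ} {T : Matrix (Fin n) (Fin n) ℝ}
    (hdd : ∀ i : Fin n, ∑ j ∈ Finset.univ.erase i, |T i j| < |T i i|)
    (γ : Fin m → Fin n) (i : Fin n) : uval T γ i ≤ |T i i| := by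
  unfold uval; split_ifs
  · exact le_rfl
  · exact (hdd i).le

lemma uval_mono {n m m' : ℕ} {T : Matrix (Fin n) (Fin n) ℝ}
    (hdd : ∀ i : Fin n, ∑ j ∈ Finset.univ.erase i, |T i j| < |T i i|)
    {γ : Fin m → Fin n} {γ' : Fin m' → Fin n}
    (h : ∀ q', ∃ q, γ q = γ' q') (i : Fin n) : uval T γ' i ≤ uval T γ i := by
  unfold uval
  split_ifs with h1 h2 h2
  · exact le_rfl
  · obtain ⟨q', hq'⟩ := h1
    obtain ⟨q, hq⟩ := h q'
    exact absurd ⟨q, hq.trans hq'⟩ h2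
  · exact (hdd i).le
  · exact le_rfl

lemma key_lemma {n : ℕ} (T : Matrix (Fin n) (Fin n) ℝ)
    (htri : ∀ i j : Fin n, j < i → T i j = 0)
    (hdd : ∀ i : Fin n, ∑ j ∈ Finset.univ.erase i, |T i j| < |T i i|) :
    ∀ (k : ℕ) (ρ γ : Fin k → Fin n), StrictMono ρ → StrictMono γ →
      |(T.submatrix ρ γ).det| ≤ ∏ p, uval T γ (ρ p) := by
  intro k
  induction k with
  | zero => intro ρ γ _ _; simp [Matrix.det_fin_zero]
  | succ k ih =>
    intro ρ γ hρ hγ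
    rcases lt_trichotomy (γ 0) (ρ 0) with h | h | h
    · -- column 0 of the submatrix is zero
      have hz : ∀ p, (T.submatrix ρ γ) p 0 = 0 := fun p =>
        htri (ρ p) (γ 0) (lt_of_lt_of_le h (hρ.monotone (Fin.zero_le p)))
      rw [Matrix.det_eq_zero_of_column_eq_zero 0 hz, abs_zero]
      exact Finset.prod_nonneg fun p _ => uval_nonneg T γ (ρ p)
    · -- γ 0 = ρ 0 : expand along column 0; only the top entry survives
      have hdet : (T.submatrix ρ γ).det =
          T (ρ 0) (ρ 0) * (T.submatrix (ρ ∘ Fin.succ) (γ ∘ Fin.succ)).det := by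
        rw [Matrix.det_succ_column_zero, Finset.sum_eq_single (0 : Fin (k + 1))]
        · simp [Matrix.submatrix_submatrix, Fin.succAbove_zero, h]
        · intro p _ hp
          have h0 : (T.submatrix ρ γ) p 0 = 0 :=
            htri (ρ p) (γ 0) (h ▸ hρ (Fin.pos_of_ne_zero hp))
          rw [h0]; ring
        · intro habs; exact absurd (Finset.mem_univ _) habs
      have hmin := ih (ρ ∘ Fin.succ) (γ ∘ Fin.succ)
        (hρ.comp Fin.strictMono_succ) (hγ.comp Fin.strictMono_succ)
      have hmin2 : |(T.submatrix (ρ ∘ Fin.succ) (γ ∘ Fin.succ)).det| ≤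
          ∏ p : Fin k, uval T γ (ρ p.succ) := by
        refine le_trans hmin (Finset.prod_le_prod (fun p _ => uval_nonneg _ _ _)
          (fun p _ => uval_mono hdd (fun q' => ⟨q'.succ, rfl⟩) _))
      rw [hdet, abs_mul, Fin.prod_univ_succ]
      have hu0 : uval T γ (ρ 0) = |T (ρ 0) (ρ 0)| := by
        unfold uval; rw [if_pos ⟨0, h⟩]
      rw [hu0]
      exact mul_le_mul_of_nonneg_left hmin2 (abs_nonneg _)
    · -- ρ 0 < γ 0 : expand along row 0
      set P : ℝ := ∏ p : Fin k, uval T γ (ρ p.succ) with hP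
      have hPnn : 0 ≤ P := Finset.prod_nonneg fun p _ => uval_nonneg _ _ _
      rw [Matrix.det_succ_row_zero]
      refine le_trans (Finset.abs_sum_le_sum_abs _ _) ?_
      have hterm : ∀ q : Fin (k + 1),
          |(-1 : ℝ) ^ (q : ℕ) * (T.submatrix ρ γ) 0 q *
            ((T.submatrix ρ γ).submatrix Fin.succ q.succAbove).det| ≤
          |T (ρ 0) (γ q)| * P := by
        intro q
        rw [abs_mul, abs_mul, abs_pow, abs_neg, abs_one, one_pow, one_mul,
          Matrix.submatrix_submatrix]
        refine mul_le_mul_of_nonneg_left ?_ (abs_nonneg _)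
        refine le_trans (ih (ρ ∘ Fin.succ) (γ ∘ q.succAbove)
          (hρ.comp Fin.strictMono_succ) (hγ.comp (Fin.strictMono_succAbove q))) ?_
        exact Finset.prod_le_prod (fun p _ => uval_nonneg _ _ _)
          (fun p _ => uval_mono hdd (fun q' => ⟨q.succAbove q', rfl⟩) _)
      refine le_trans (Finset.sum_le_sum fun q _ => hterm q) ?_
      rw [← Finset.sum_mul]
      have hsum : (∑ q : Fin (k + 1), |T (ρ 0) (γ q)|) ≤
          ∑ j ∈ Finset.univ.erase (ρ 0), |T (ρ 0) j| := by
        have himg : ∑ j ∈ Finset.univ.image γ, |T (ρ 0) j| =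
            ∑ q : Fin (k + 1), |T (ρ 0) (γ q)| :=
          Finset.sum_image (fun x _ y _ hxy => hγ.injective hxy)
        rw [← himg]
        refine Finset.sum_le_sum_of_subset_of_nonneg ?_ (fun _ _ _ => abs_nonneg _)
        intro j hj
        obtain ⟨q, _, rfl⟩ := Finset.mem_image.mp hj
        refine Finset.mem_erase.mpr ⟨?_, Finset.mem_univ _⟩
        exact ne_of_gt (lt_of_lt_of_le h (hγ.monotone (Fin.zero_le q)))
      have hu0 : uval T γ (ρ 0) = ∑ j ∈ Finset.univ.erase (ρ 0), |T (ρ 0) j| := by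
        unfold uval
        rw [if_neg]
        rintro ⟨q, hq⟩
        exact absurd (hq ▸ lt_of_lt_of_le h (hγ.monotone (Fin.zero_le q))) (lt_irrefl _)
      rw [Fin.prod_univ_succ, hu0]
      exact mul_le_mul_of_nonneg_right hsum hPnn

/-- The submatrix of `T` with rows indexed by `I` and columns by `J` (both of cardinality `k`). -/
noncomputable def subm {n k : ℕ} (T : Matrix (Fin n) (Fin n) ℝ)
    (I J : Finset (Fin n)) (hI : I.card = k) (hJ : J.card = k) :
    Matrix (Fin k) (Fin k) ℝ :=
  T.submatrix (fun i => (I.orderIsoOfFin hI i : Fin n)) (fun j => (J.orderIsoOfFin hJ j : Fin n))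

/-- For a strictly row diagonally dominant upper triangular matrix `T`,
`|det(T(I,J))| < |det(T(I,I))|` whenever `|I| = |J|` and `I ≠ J`. -/
theorem det_lt_of_strictDD_upperTriangular {n : ℕ} (T : Matrix (Fin n) (Fin n) ℝ)
    (htri : ∀ i j : Fin n, j < i → T i j = 0)
    (hdd : ∀ i : Fin n, ∑ j ∈ Finset.univ.erase i, |T i j| < |T i i|)
    {k : ℕ} (I J : Finset (Fin n)) (hI : I.card = k) (hJ : J.card = k) (hIJ : I ≠ J) :
    |(subm T I J hI hJ).det| < |(subm T I I hI hI).det| := by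
  set ρ : Fin k → Fin n := fun i => I.orderEmbOfFin hI i with hρdef
  set γ : Fin k → Fin n := fun j => J.orderEmbOfFin hJ j with hγdef
  have hρ : StrictMono ρ := (I.orderEmbOfFin hI).strictMono
  have hγ : StrictMono γ := (J.orderEmbOfFin hJ).strictMono
  have hsub : subm T I J hI hJ = T.submatrix ρ γ := rfl
  have hsubI : subm T I I hI hI = T.submatrix ρ ρ := rfl
  -- diagonal positivity
  have hdpos : ∀ i : Fin n, 0 < |T i i| := fun i =>
    lt_of_le_of_lt (Finset.sum_nonneg fun _ _ => abs_nonneg _) (hdd i)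
  -- |det T(I,I)| = product of diagonal entries
  have htriI : (T.submatrix ρ ρ).BlockTriangular id := fun p q hqp =>
    htri (ρ p) (ρ q) (hρ hqp)
  have hdetI : |(T.submatrix ρ ρ).det| = ∏ p, |T (ρ p) (ρ p)| := by
    rw [Matrix.det_of_upperTriangular htriI, Finset.abs_prod]
    rfl
  -- a row index not hit by the columns
  have hnss : ¬ I ⊆ J := fun hss =>
    hIJ (Finset.eq_of_subset_of_card_le hss (by rw [hI, hJ]))
  obtain ⟨i0, hi0I, hi0J⟩ := Finset.not_subset.mp hnss
  obtain ⟨p0, hp0⟩ : ∃ p0, ρ p0 = i0 := by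
    have : i0 ∈ Set.range (I.orderEmbOfFin hI) := by
      rw [Finset.range_orderEmbOfFin]; exact_mod_cast hi0I
    exact this
  have hup0 : uval T γ (ρ p0) = ∑ j ∈ Finset.univ.erase (ρ p0), |T (ρ p0) j| := by
    unfold uval
    rw [if_neg]
    rintro ⟨q, hq⟩
    apply hi0J
    have : γ q ∈ J := J.orderEmbOfFin_mem hJ q
    rwa [hq, hp0] at this
  have hkey := key_lemma T htri hdd k ρ γ hρ hγ
  rw [hsub, hsubI, hdetI]
  refine lt_of_le_of_lt hkey ?_
  have hmem : p0 ∈ (Finset.univ : Finset (Fin k)) := Finset.mem_univ _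
  calc ∏ p, uval T γ (ρ p)
      = uval T γ (ρ p0) * ∏ p ∈ Finset.univ.erase p0, uval T γ (ρ p) :=
        (Finset.mul_prod_erase _ _ hmem).symm
    _ ≤ uval T γ (ρ p0) * ∏ p ∈ Finset.univ.erase p0, |T (ρ p) (ρ p)| := by
        refine mul_le_mul_of_nonneg_left ?_ (uval_nonneg _ _ _)
        exact Finset.prod_le_prod (fun p _ => uval_nonneg _ _ _)
          (fun p _ => uval_le_diag hdd _ _)
    _ < |T (ρ p0) (ρ p0)| * ∏ p ∈ Finset.univ.erase p0, |T (ρ p) (ρ p)| := by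
        refine mul_lt_mul_of_pos_right ?_ ?_
        · rw [hup0]; exact hdd _
        · exact Finset.prod_pos fun p _ => hdpos _
    _ = ∏ p, |T (ρ p) (ρ p)| :=
        Finset.mul_prod_erase Finset.univ (fun p => |T (ρ p) (ρ p)|) hmem
end

section
/- Let T ∈ ℝ^{n×n} be an upper triangular matrix with ones on the diagonal that is strictly row diagonally dominant. Then every k×k submatrix T(I,J) satisfies |det(T(I,J))| ≤ 1, with equality only possible when I = J. -/
lemma erase_card_aux {n k : ℕ} (S : Finset (Fin n)) (h : S.card = k+1) {a : Fin n} (ha : a ∈ S) :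
    (S.erase a).card = k := by rw [Finset.card_erase_of_mem ha, h]; rfl

lemma orderEmbOfFin_erase {n k : ℕ} (S : Finset (Fin n)) (h : S.card = k+1)
    (m : Fin (k+1)) (q : Fin k) :
    (S.erase (S.orderEmbOfFin h m)).orderEmbOfFin
      (erase_card_aux S h (S.orderEmbOfFin_mem h m)) q
    = S.orderEmbOfFin h (m.succAbove q) := by
  have hmem : ∀ x : Fin k, S.orderEmbOfFin h (m.succAbove x) ∈ S.erase (S.orderEmbOfFin h m) := by
    intro x
    refine Finset.mem_erase.2 ⟨fun hc => ?_, S.orderEmbOfFin_mem h _⟩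
    exact Fin.succAbove_ne m x ((S.orderEmbOfFin h).injective hc)
  have hmono : StrictMono (fun x : Fin k => S.orderEmbOfFin h (m.succAbove x)) :=
    (S.orderEmbOfFin h).strictMono.comp (Fin.succAboveOrderEmb m).strictMono
  have := Finset.orderEmbOfFin_unique (erase_card_aux S h (S.orderEmbOfFin_mem h m)) hmem hmono
  exact (congrFun this q).symm

/-- For a unit upper triangular strictly row diagonally dominant matrix `T`,
every `k × k` submatrix satisfies `|det(T(I,J))| ≤ 1`, with equality only
possible when `I = J`. -/
theorem det_le_one_of_unit_strictDD_upperTriangular {n : ℕ} (T : Matrix (Fin n) (Fin n) ℝ)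
    (htri : ∀ i j : Fin n, j < i → T i j = 0)
    (hdiag : ∀ i : Fin n, T i i = 1)
    (hdd : ∀ i : Fin n, ∑ j ∈ Finset.univ.erase i, |T i j| < 1)
    {k : ℕ} (I J : Finset (Fin n)) (hI : I.card = k) (hJ : J.card = k) :
    |(subm T I J hI hJ).det| ≤ 1 ∧ (I ≠ J → |(subm T I J hI hJ).det| < 1) := by
  induction k generalizing I J with
  | zero =>
    have hIe : I = ∅ := Finset.card_eq_zero.mp hI
    have hJe : J = ∅ := Finset.card_eq_zero.mp hJ
    constructor
    · simp [Matrix.det_fin_zero]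
    · intro h; exact absurd (hIe.trans hJe.symm) h
  | succ k ih =>
    have hA : subm T I J hI hJ = T.submatrix (I.orderEmbOfFin hI) (J.orderEmbOfFin hJ) := by
      ext p q; simp [subm, Finset.coe_orderIsoOfFin_apply]
    set f := I.orderEmbOfFin hI with hf
    set g := J.orderEmbOfFin hJ with hg
    have hI' : (I.erase (f 0)).card = k := erase_card_aux I hI (I.orderEmbOfFin_mem hI 0)
    have hJ' : ∀ m : Fin (k+1), (J.erase (g m)).card = k :=
      fun m => erase_card_aux J hJ (J.orderEmbOfFin_mem hJ m)
    -- minor identity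
    have hminor : ∀ m : Fin (k+1),
        (T.submatrix f g).submatrix Fin.succ m.succAbove
          = subm T (I.erase (f 0)) (J.erase (g m)) hI' (hJ' m) := by
      intro m
      ext p q
      have hr := orderEmbOfFin_erase I hI 0 p
      have hc := orderEmbOfFin_erase J hJ m q
      simp only [Fin.zero_succAbove] at hr
      simp [subm, Finset.coe_orderIsoOfFin_apply, hr, hc, hf, hg]
    rcases lt_trichotomy (g 0) (f 0) with hlt | heq | hlt
    · -- first column of the submatrix is zero
      have h0 : ∀ p, (T.submatrix f g) p 0 = 0 := by
        intro p
        exact htri _ _ (lt_of_lt_of_le hlt (f.monotone (Fin.zero_le p)))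
      have : (subm T I J hI hJ).det = 0 := by
        rw [hA]; exact Matrix.det_eq_zero_of_column_eq_zero 0 h0
      rw [this]
      norm_num
    · -- f 0 = g 0 : expand along first column, only the top entry survives
      have hdet : (subm T I J hI hJ).det
          = (subm T (I.erase (f 0)) (J.erase (g 0)) hI' (hJ' 0)).det := by
        rw [hA, Matrix.det_succ_column_zero]
        rw [Fintype.sum_eq_single 0]
        · have h00 : (T.submatrix f g) 0 0 = 1 := by
            simp only [Matrix.submatrix_apply]
            rw [heq]; exact hdiag _
          have hm : (T.submatrix f g).submatrix (Fin.succAbove 0) Fin.succ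
              = subm T (I.erase (f 0)) (J.erase (g 0)) hI' (hJ' 0) := by
            rw [← hminor 0]
            ext p q
            simp [Fin.zero_succAbove]
          rw [hm, h00]
          simp
        · intro i hi
          have hzero : (T.submatrix f g) i 0 = 0 := by
            have : f 0 < f i := f.strictMono (Fin.pos_iff_ne_zero.mpr hi)
            exact htri _ _ (heq ▸ this)
          rw [hzero, mul_zero, zero_mul]
      have hne : I ≠ J → I.erase (f 0) ≠ J.erase (g 0) := by
        intro hIJ hc
        apply hIJ
        have h1 : I = insert (f 0) (I.erase (f 0)) :=
          (Finset.insert_erase (I.orderEmbOfFin_mem hI 0)).symm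
        have h2 : J = insert (g 0) (J.erase (g 0)) :=
          (Finset.insert_erase (J.orderEmbOfFin_mem hJ 0)).symm
        rw [h1, h2, hc, heq]
      obtain ⟨ih1, ih2⟩ := ih (I.erase (f 0)) (J.erase (g 0)) hI' (hJ' 0)
      rw [hdet]
      exact ⟨ih1, fun h => ih2 (hne h)⟩
    · -- f 0 < g 0 : expand along first row, strict bound
      have key : |(subm T I J hI hJ).det| < 1 := by
        rw [hA, Matrix.det_succ_row_zero]
        have step1 : |∑ m : Fin (k+1), (-1) ^ (m : ℕ) * (T.submatrix f g) 0 m *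
              ((T.submatrix f g).submatrix Fin.succ m.succAbove).det|
            ≤ ∑ m : Fin (k+1), |T (f 0) (g m)| := by
          refine le_trans (Finset.abs_sum_le_sum_abs _ _) (Finset.sum_le_sum fun m _ => ?_)
          rw [abs_mul, abs_mul, abs_pow, abs_neg, abs_one, one_pow, one_mul]
          have hb := (ih (I.erase (f 0)) (J.erase (g m)) hI' (hJ' m)).1
          rw [← hminor m] at hb
          calc |(T.submatrix f g) 0 m| * |((T.submatrix f g).submatrix Fin.succ m.succAbove).det|
              ≤ |(T.submatrix f g) 0 m| * 1 :=
                mul_le_mul_of_nonneg_left hb (abs_nonneg _)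
            _ = |T (f 0) (g m)| := by rw [mul_one]; rfl
        refine lt_of_le_of_lt step1 (lt_of_le_of_lt ?_ (hdd (f 0)))
        have hsum : ∑ m : Fin (k+1), |T (f 0) (g m)| = ∑ j ∈ J, |T (f 0) j| := by
          rw [← Finset.sum_attach J (fun j => |T (f 0) j|)]
          exact Fintype.sum_equiv (J.orderIsoOfFin hJ).toEquiv _ _ (fun m => by
            simp [hg, Finset.coe_orderIsoOfFin_apply])
        rw [hsum]
        refine Finset.sum_le_sum_of_subset_of_nonneg ?_ (fun j _ _ => abs_nonneg _)
        intro j hj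
        refine Finset.mem_erase.2 ⟨?_, Finset.mem_univ j⟩
        have h0 := Finset.orderEmbOfFin_zero hJ (Nat.succ_pos k)
        have hgj : g 0 ≤ j := h0.trans_le (J.min'_le j hj)
        exact fun hc => absurd (hc ▸ hgj) (not_le.mpr hlt)
      exact ⟨le_of_lt key, fun _ => key⟩
end

section
/- Let A ∈ ℝ^{n×n} be row diagonally dominant of rank at least m < n, and let I, J be produced by m steps of cross approximation with complete pivoting. Then ‖A − A(:,J)A(I,J)^{-1}A(I,:)‖_max ≤ (m+1) · 2^{m+1} · σ_{m+1}(A). -/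
/-!
Complete pivoting on a row diagonally dominant matrix keeps every residual row diagonally
dominant up to a permutation of the columns. Hence residual row sums never grow and no pivot is
smaller than half of a later one. If the largest entry `p` of `R m` is nonzero, it is the pivot of
an `(m+1)`-st step, and the `(m+1) × (m+1)` pivot block `A(I,J)` factors as `L U`, with `L` unit
lower triangular with entries bounded by `1` and `U` upper triangular with dominant rows and
diagonal at least `p / 2`. So the entries of `A(I,J)⁻¹` are at most `2^(m+1) / p`, whence
`‖A(I,J) v‖ ≥ p / ((m+1) 2^(m+1)) ‖v‖`, and Courant–Fischer turns this into
`σ_{m+1}(A) ≥ p / ((m+1) 2^(m+1))`. Finally `A - A(:,J) A(I,J)⁻¹ A(I,:) = R m`, because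
`A - R m` is the partial LU product computed by the run.
-/

/-- The singular values of a real matrix: square roots of the eigenvalues of `AᴴA`. -/
noncomputable def svals {n m : ℕ} (A : Matrix (Fin n) (Fin m) ℝ) : Fin m → ℝ :=
  fun i => Real.sqrt ((show (A.transpose * A).IsHermitian by
    simpa [Matrix.conjTranspose_eq_transpose_of_trivial] using
      Matrix.isHermitian_conjTranspose_mul_self A).eigenvalues i)

/-- `sigma A k` is the `k`-th largest singular value of `A` (1-indexed). -/
noncomputable def sigma {n : ℕ} (A : Matrix (Fin n) (Fin n) ℝ) (k : ℕ) : ℝ :=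
  (Multiset.sort (Multiset.map (svals A) Finset.univ.val) (· ≤ ·)).getD (n - k) 0

/-- The entrywise maximum norm of a matrix. -/
noncomputable def maxNorm {n m : ℕ} (E : Matrix (Fin n) (Fin m) ℝ) : ℝ :=
  ⨆ i, ⨆ j, |E i j|

/-- `CrossApproxSeq A m R i j` records a run of `m` steps of cross approximation
with complete pivoting on `A`: `R 0 = A`, and at each step `k < m` the pivot
`(i k, j k)` is a nonzero entry of maximal absolute value of the residual `R k`,
which is then updated by subtracting the corresponding rank-one cross. -/
def CrossApproxSeq {n : ℕ} (A : Matrix (Fin n) (Fin n) ℝ) (m : ℕ)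
    (R : ℕ → Matrix (Fin n) (Fin n) ℝ) (i j : ℕ → Fin n) : Prop :=
  R 0 = A ∧ ∀ k < m,
    R k (i k) (j k) ≠ 0 ∧
    (∀ a b : Fin n, |R k a b| ≤ |R k (i k) (j k)|) ∧
    R (k + 1) =
      R k - (R k (i k) (j k))⁻¹ • Matrix.of (fun a b => R k a (j k) * R k (i k) b)

open Matrix Finset

section Dominance

variable {ι : Type*}

lemma sum_abs_sub_smul_le (s : Finset ι) (x y : ι → ℝ) (t : ℝ) :
    ∑ c ∈ s, |(x - t • y) c| ≤ ∑ c ∈ s, |x c| + |t| * ∑ c ∈ s, |y c| := by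
  rw [mul_sum, ← sum_add_distrib]
  refine sum_le_sum fun c _ => ?_
  simpa [abs_mul] using abs_sub (x c) (t * y c)

variable [Fintype ι] [DecidableEq ι]

def IsDominantAt (x : ι → ℝ) (d : ι) : Prop :=
  ∑ c ∈ univ.erase d, |x c| ≤ |x d|

lemma IsDominantAt.sum_abs_le_two_mul {x : ι → ℝ} {d : ι} (h : IsDominantAt x d) :
    ∑ c, |x c| ≤ 2 * |x d| := by
  rw [← add_sum_erase _ _ (mem_univ d)]
  unfold IsDominantAt at h
  linarith

lemma IsDominantAt.of_abs_le {x : ι → ℝ} {d j : ι} (h : IsDominantAt x d)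
    (hdj : |x d| ≤ |x j|) : IsDominantAt x j := by
  have hd := add_sum_erase univ (fun c => |x c|) (mem_univ d)
  have hj := add_sum_erase univ (fun c => |x c|) (mem_univ j)
  unfold IsDominantAt at *
  linarith

lemma IsDominantAt.sum_erase_erase_le {x : ι → ℝ} {e f : ι} (h : IsDominantAt x e)
    (hfe : f ≠ e) : ∑ c ∈ (univ.erase e).erase f, |x c| ≤ |x e| - |x f| := by
  rw [sum_erase_eq_sub (mem_erase.2 ⟨hfe, mem_univ f⟩)]
  unfold IsDominantAt at h
  linarith

lemma isDominantAt_zero (d : ι) : IsDominantAt (0 : ι → ℝ) d := by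
  simp [IsDominantAt]

variable {x y : ι → ℝ} {t : ℝ} {j : ι}

lemma sum_abs_sub_smul_le_of_isDominantAt (hj : x j = t * y j) (hy : IsDominantAt y j) :
    ∑ c, |(x - t • y) c| ≤ ∑ c, |x c| := by
  have hx := add_sum_erase univ (fun c => |x c|) (mem_univ j)
  have hx' := add_sum_erase univ (fun c => |(x - t • y) c|) (mem_univ j)
  have hxj' : (x - t • y) j = 0 := by simp [hj]
  rw [hj, abs_mul] at hx
  rw [hxj', abs_zero, zero_add] at hx'
  have := sum_abs_sub_smul_le (univ.erase j) x y t
  have := mul_le_mul_of_nonneg_left hy (abs_nonneg t)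
  linarith

lemma IsDominantAt.sub_smul {d : ι} (hdj : d ≠ j) (hj : x j = t * y j)
    (h : IsDominantAt x d ∧ IsDominantAt y j ∨ IsDominantAt x j ∧ IsDominantAt y d) :
    IsDominantAt (x - t • y) d := by
  set S := (univ.erase d).erase j
  have hsplit : ∑ c ∈ univ.erase d, |(x - t • y) c| = ∑ c ∈ S, |(x - t • y) c| := by
    rw [sum_erase_eq_sub (mem_erase.2 ⟨hdj.symm, mem_univ j⟩)]
    simp [hj]
  have hS := sum_abs_sub_smul_le S x y t
  have hxj : |x j| = |t| * |y j| := by rw [hj, abs_mul]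
  have hlow₁ : |x d| - |t| * |y d| ≤ |(x - t • y) d| := by
    simpa [abs_mul] using abs_sub_abs_le_abs_sub (x d) (t * y d)
  have hlow₂ : |t| * |y d| - |x d| ≤ |(x - t • y) d| := by
    simpa [abs_mul, abs_sub_comm] using abs_sub_abs_le_abs_sub (t * y d) (x d)
  unfold IsDominantAt
  rw [hsplit]
  -- in the two cases the sum over `S` is at most `|x d| - |t| |y d|`, resp. its negative
  rcases h with ⟨hx, hy⟩ | ⟨hx, hy⟩
  · have hx' := hx.sum_erase_erase_le hdj.symm
    have hy' := hy.sum_erase_erase_le hdj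
    rw [erase_right_comm] at hy'
    linarith [mul_le_mul_of_nonneg_left hy' (abs_nonneg t)]
  · have hx' := hx.sum_erase_erase_le hdj
    have hy' := hy.sum_erase_erase_le hdj.symm
    rw [erase_right_comm] at hx'
    linarith [mul_le_mul_of_nonneg_left hy' (abs_nonneg t)]

end Dominance

section CrossStep

variable {m n K : Type*} [Field K]

noncomputable def crossStep (R : Matrix m n K) (i : m) (j : n) : Matrix m n K :=
  R - (R i j)⁻¹ • Matrix.of fun a b => R a j * R i b

variable {R : Matrix m n K} {i : m} {j : n}

lemma crossStep_row (a : m) : crossStep R i j a = R a - (R a j / R i j) • R i := by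
  ext b
  simp [crossStep, div_eq_inv_mul, mul_assoc]

lemma crossStep_apply (a : m) (b : n) : crossStep R i j a b = R a b - R a j / R i j * R i b :=
  congrFun (crossStep_row a) b

lemma crossStep_pivot_row (hne : R i j ≠ 0) : crossStep R i j i = 0 := by
  ext b
  simp [crossStep_apply, hne]

lemma crossStep_pivot_col (hne : R i j ≠ 0) (a : m) : crossStep R i j a j = 0 := by
  simp [crossStep_apply, hne]

lemma crossStep_row_eq_zero {a : m} (ha : R a = 0) : crossStep R i j a = 0 := by
  simp [crossStep_row, ha]

lemma crossStep_col_eq_zero {b : n} (hb : ∀ a, R a b = 0) (a : m) : crossStep R i j a b = 0 := by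
  simp [crossStep_apply, hb]

end CrossStep

section CrossStepDominance

variable {ι : Type*} [Fintype ι] [DecidableEq ι] {R : Matrix ι ι ℝ} {i j : ι}

lemma isDominantAt_pivot_row {σ : ι → ι} (hR : ∀ a, IsDominantAt (R a) (σ a))
    (hmax : ∀ a b, |R a b| ≤ |R i j|) : IsDominantAt (R i) j :=
  (hR i).of_abs_le (hmax i (σ i))

lemma sum_abs_crossStep_le {σ : ι → ι} (hR : ∀ a, IsDominantAt (R a) (σ a))
    (hne : R i j ≠ 0) (hmax : ∀ a b, |R a b| ≤ |R i j|) (a : ι) :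
    ∑ c, |crossStep R i j a c| ≤ ∑ c, |R a c| := by
  rw [crossStep_row]
  exact sum_abs_sub_smul_le_of_isDominantAt (by field_simp) (isDominantAt_pivot_row hR hmax)

/-- The only row whose dominant column `j` is eliminated takes over the dominant column of the
pivot row. -/
lemma exists_perm_isDominantAt_crossStep {σ : Equiv.Perm ι}
    (hR : ∀ a, IsDominantAt (R a) (σ a)) (hne : R i j ≠ 0) (hmax : ∀ a b, |R a b| ≤ |R i j|) :
    ∃ σ' : Equiv.Perm ι, ∀ a, IsDominantAt (crossStep R i j a) (σ' a) := by
  refine ⟨σ * Equiv.swap i (σ.symm j), fun a => ?_⟩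
  by_cases hai : a = i
  · subst hai
    rw [crossStep_pivot_row hne]
    exact isDominantAt_zero _
  have hpiv := isDominantAt_pivot_row hR hmax
  have hj : R a j = R a j / R i j * R i j := by field_simp
  rw [crossStep_row, Equiv.Perm.mul_apply]
  by_cases has : a = σ.symm j
  · have hσa : σ a = j := by simp [has]
    rw [has, Equiv.swap_apply_right, ← has]
    refine IsDominantAt.sub_smul (fun h => hai ?_) hj (Or.inr ⟨hσa ▸ hR a, hR i⟩)
    rw [has, ← h, Equiv.symm_apply_apply]
  · rw [Equiv.swap_apply_of_ne_of_ne hai has]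
    refine IsDominantAt.sub_smul (fun h => has ?_) hj (Or.inl ⟨hR a, hpiv⟩)
    rw [← h, Equiv.symm_apply_apply]

end CrossStepDominance

section Triangular

variable {N : ℕ}

lemma Matrix.IsUpperTriangular.mul_apply_eq_add_sum_Ioi {U : Matrix (Fin N) (Fin N) ℝ}
    (hU : U.IsUpperTriangular) (B : Matrix (Fin N) (Fin N) ℝ) (k l : Fin N) :
    (U * B) k l = U k k * B k l + ∑ t ∈ Ioi k, U k t * B t l := by
  rw [mul_apply, ← sum_subset (subset_univ (Ici k)), ← Ioi_insert, sum_insert (by simp)]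
  intro t _ ht
  rw [hU (not_le.1 (by simpa using ht)), zero_mul]

lemma Matrix.IsLowerTriangular.mul_apply_eq_add_sum_Iio {L : Matrix (Fin N) (Fin N) ℝ}
    (hL : L.IsLowerTriangular) (B : Matrix (Fin N) (Fin N) ℝ) (k l : Fin N) :
    (L * B) k l = L k k * B k l + ∑ t ∈ Iio k, L k t * B t l := by
  rw [mul_apply, ← sum_subset (subset_univ (Iic k)), ← Iio_insert, sum_insert (by simp)]
  intro t _ ht
  rw [hL (not_le.1 (by simpa using ht) : k < t), zero_mul]

lemma Matrix.IsUpperTriangular.abs_inv_apply_le {U : Matrix (Fin N) (Fin N) ℝ}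
    (hU : U.IsUpperTriangular) (hdiag : ∀ k, U k k ≠ 0)
    (hdd : ∀ k, ∑ l ∈ Ioi k, |U k l| ≤ |U k k|) (k l : Fin N) :
    |U⁻¹ k l| ≤ |U l l|⁻¹ := by
  have hu : IsUnit U.det := by
    rw [det_of_isUpperTriangular hU]
    exact (prod_ne_zero_iff.2 fun k _ => hdiag k).isUnit
  have := U.invertibleOfIsUnitDet hu
  have hB : U⁻¹.IsUpperTriangular := blockTriangular_inv_of_blockTriangular hU
  have hrow (k l : Fin N) :
      U k k * U⁻¹ k l + ∑ t ∈ Ioi k, U k t * U⁻¹ t l = if k = l then 1 else 0 := by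
    rw [← hU.mul_apply_eq_add_sum_Ioi, mul_nonsing_inv U hu, one_apply]
  induction k using WellFoundedGT.induction with
  | _ k ih =>
  rcases lt_trichotomy k l with hkl | rfl | hlk
  · have h := hrow k l
    rw [if_neg hkl.ne, add_eq_zero_iff_eq_neg] at h
    have hbound : |U k k| * |U⁻¹ k l| ≤ |U k k| * |U l l|⁻¹ := by
      rw [← abs_mul, h, abs_neg]
      calc |∑ t ∈ Ioi k, U k t * U⁻¹ t l|
          ≤ ∑ t ∈ Ioi k, |U k t| * |U l l|⁻¹ := by
            refine (abs_sum_le_sum_abs _ _).trans (sum_le_sum fun t ht => ?_)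
            rw [abs_mul]
            exact mul_le_mul_of_nonneg_left (ih t (mem_Ioi.1 ht)) (abs_nonneg _)
        _ ≤ |U k k| * |U l l|⁻¹ := by
            rw [← sum_mul]
            exact mul_le_mul_of_nonneg_right (hdd k) (by positivity)
    exact le_of_mul_le_mul_left hbound (abs_pos.2 (hdiag k))
  · have h := hrow k k
    rw [if_pos rfl, sum_eq_zero fun t ht => by rw [hB (mem_Ioi.1 ht), mul_zero], add_zero] at h
    rw [eq_inv_of_mul_eq_one_right h, abs_inv]
  · rw [hB hlk, abs_zero]
    positivity

lemma Matrix.IsLowerTriangular.sum_Iic_abs_inv_apply_le {L : Matrix (Fin N) (Fin N) ℝ}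
    (hL : L.IsLowerTriangular) (hdiag : ∀ k, L k k = 1) (hle : ∀ k l, |L k l| ≤ 1)
    (k l : Fin N) : ∑ t ∈ Iic k, |L⁻¹ t l| ≤ 2 ^ ((k : ℕ) - l) := by
  have hu : IsUnit L.det := by simp [det_of_isLowerTriangular L hL, hdiag]
  have := L.invertibleOfIsUnitDet hu
  have hzero : ∀ t < l, L⁻¹ t l = 0 := fun t ht =>
    (blockTriangular_inv_of_blockTriangular hL : L⁻¹.IsLowerTriangular) ht
  have hrow (k : Fin N) : L⁻¹ k l + ∑ t ∈ Iio k, L k t * L⁻¹ t l = if k = l then 1 else 0 := by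
    have h := hL.mul_apply_eq_add_sum_Iio L⁻¹ k l
    rwa [mul_nonsing_inv L hu, one_apply, hdiag, one_mul, eq_comm] at h
  induction k using WellFoundedLT.induction with
  | _ k ih =>
  rw [← Iio_insert, sum_insert (by simp)]
  rcases lt_trichotomy k l with hkl | rfl | hlk
  · rw [hzero k hkl, sum_eq_zero fun t ht => by rw [hzero t ((mem_Iio.1 ht).trans hkl), abs_zero]]
    simp
  · have h := hrow k
    rw [if_pos rfl, sum_eq_zero fun t ht => by rw [hzero t (mem_Iio.1 ht), mul_zero],
      add_zero] at h
    rw [h, sum_eq_zero fun t ht => by rw [hzero t (mem_Iio.1 ht), abs_zero]]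
    simp
  · have h := hrow k
    rw [if_neg hlk.ne', add_eq_zero_iff_eq_neg] at h
    have hk : |L⁻¹ k l| ≤ ∑ t ∈ Iio k, |L⁻¹ t l| := by
      rw [h, abs_neg]
      refine (abs_sum_le_sum_abs _ _).trans (sum_le_sum fun t _ => ?_)
      rw [abs_mul]
      exact mul_le_of_le_one_left (abs_nonneg _) (hle k t)
    have hk0 : 0 < (k : ℕ) := lt_of_le_of_lt (Nat.zero_le _) hlk
    set k' : Fin N := ⟨k - 1, by omega⟩
    have hIio : Iio k = Iic k' := by
      ext t
      simp only [mem_Iio, mem_Iic, Fin.lt_def, Fin.le_def, k']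
      omega
    have hprev := ih k' (by simp [Fin.lt_def, k']; omega)
    rw [← hIio] at hprev
    calc |L⁻¹ k l| + ∑ t ∈ Iio k, |L⁻¹ t l| ≤ 2 * 2 ^ ((k' : ℕ) - l) := by linarith
      _ = 2 ^ ((k : ℕ) - l) := by
        rw [← pow_succ']
        congr 1
        simp only [k']
        omega

lemma Matrix.IsLowerTriangular.sum_abs_inv_apply_le {L : Matrix (Fin N) (Fin N) ℝ}
    (hL : L.IsLowerTriangular) (hdiag : ∀ k, L k k = 1) (hle : ∀ k l, |L k l| ≤ 1)
    (l : Fin N) : ∑ t, |L⁻¹ t l| ≤ 2 ^ (N - 1) := by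
  have hN : 0 < N := l.pos
  have huniv : (univ : Finset (Fin N)) = Iic ⟨N - 1, by omega⟩ := by
    ext t
    simp only [mem_univ, mem_Iic, Fin.le_def, true_iff]
    omega
  rw [huniv]
  exact (hL.sum_Iic_abs_inv_apply_le hdiag hle _ l).trans
    (pow_le_pow_right₀ one_le_two (by simp))

end Triangular

section InverseBounds

lemma dotProduct_mulVec_self_le {m n : Type*} [Fintype m] [Fintype n] {C : Matrix m n ℝ}
    {β : ℝ} (hC : ∀ k l, |C k l| ≤ β) (w : n → ℝ) :
    (C *ᵥ w) ⬝ᵥ (C *ᵥ w) ≤ Fintype.card m * Fintype.card n * β ^ 2 * (w ⬝ᵥ w) := by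
  have hrow (k : m) : (C *ᵥ w) k * (C *ᵥ w) k ≤ Fintype.card n * β ^ 2 * (w ⬝ᵥ w) := by
    calc (C *ᵥ w) k * (C *ᵥ w) k ≤ (∑ l, C k l ^ 2) * ∑ l, w l ^ 2 := by
          rw [← sq]
          exact sum_mul_sq_le_sq_mul_sq _ _ _
      _ ≤ (∑ _l : n, β ^ 2) * (w ⬝ᵥ w) := by
          simp only [dotProduct, ← sq]
          refine mul_le_mul_of_nonneg_right (sum_le_sum fun l _ => ?_)
            (sum_nonneg fun l _ => sq_nonneg _)
          exact sq_le_sq' (abs_le.1 (hC k l)).1 (abs_le.1 (hC k l)).2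
      _ = _ := by simp
  calc (C *ᵥ w) ⬝ᵥ (C *ᵥ w) ≤ ∑ _k : m, Fintype.card n * β ^ 2 * (w ⬝ᵥ w) :=
        sum_le_sum fun k _ => hrow k
    _ = _ := by simp [mul_assoc]

lemma dotProduct_self_le_of_abs_inv_le {N : ℕ} {M : Matrix (Fin N) (Fin N) ℝ}
    (hM : IsUnit M.det) {β : ℝ} (hβ : ∀ k l, |M⁻¹ k l| ≤ β) (v : Fin N → ℝ) :
    v ⬝ᵥ v ≤ (N * β) ^ 2 * ((M *ᵥ v) ⬝ᵥ (M *ᵥ v)) := by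
  have h := dotProduct_mulVec_self_le hβ (M *ᵥ v)
  rw [mulVec_mulVec, nonsing_inv_mul M hM, one_mulVec] at h
  rw [Fintype.card_fin] at h
  linarith

end InverseBounds

section SingularValues

lemma List.le_getD_of_le_countP {l : List ℝ} (hl : l.Pairwise (· ≤ ·)) {c : ℝ} {N : ℕ}
    (hN : 0 < N) (hlen : N ≤ l.length) (hcount : N ≤ l.countP fun x => c ≤ x) :
    c ≤ l.getD (l.length - N) 0 := by
  set k := l.length - N
  have hk : k < l.length := by omega
  rw [List.getD_eq_getElem l 0 hk]
  by_contra! hlt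
  have htake : (l.take (k + 1)).countP (fun x => c ≤ x) = 0 := by
    refine List.countP_eq_zero.2 fun a ha => ?_
    obtain ⟨s, hs, rfl⟩ := List.mem_take_iff_getElem.1 ha
    have hsk : l[s] ≤ l[k] := hl.rel_get_of_le (a := ⟨s, by omega⟩) (b := ⟨k, hk⟩)
      (Fin.mk_le_mk.2 (by omega))
    simpa using hsk.trans_lt hlt
  have hdrop := (l.drop (k + 1)).countP_le_length (p := fun x => c ≤ x)
  have hsplit : l.countP (fun x => c ≤ x) =
      (l.take (k + 1)).countP (fun x => c ≤ x) + (l.drop (k + 1)).countP (fun x => c ≤ x) := by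
    rw [← List.countP_append, List.take_append_drop]
  simp only [List.length_drop] at hdrop
  omega

lemma Function.Injective.sum_extend_zero {κ ι R M : Type*} [Fintype κ] [Fintype ι] [Zero R]
    [AddCommMonoid M] {c : κ → ι} (hc : c.Injective) (v : κ → R) (f : ι → R → M)
    (hf : ∀ a, f a 0 = 0) : ∑ a, f a (Function.extend c v 0 a) = ∑ l, f (c l) (v l) := by
  rw [← sum_subset (subset_univ (univ.map ⟨c, hc⟩)), sum_map]
  · simp [hc.extend_apply]
  · intro a _ ha
    rw [Function.extend_apply' _ _ _ (by simpa using ha), Pi.zero_apply, hf]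

variable {n : ℕ}

lemma Matrix.IsHermitian.dotProduct_mulVec_eq_sum {S : Matrix (Fin n) (Fin n) ℝ}
    (hS : S.IsHermitian) (x : Fin n → ℝ) :
    x ⬝ᵥ (S *ᵥ x) =
      ∑ t, hS.eigenvalues t * ((hS.eigenvectorUnitary : Matrix (Fin n) (Fin n) ℝ)ᵀ *ᵥ x) t ^ 2 := by
  set U : Matrix (Fin n) (Fin n) ℝ := ↑hS.eigenvectorUnitary
  have hspec : S = U * diagonal hS.eigenvalues * Uᵀ := by
    conv_lhs => rw [hS.spectral_theorem, Unitary.conjStarAlgAut_apply]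
    simp [U, Matrix.star_eq_conjTranspose]
  conv_lhs => rw [hspec]
  rw [← mulVec_mulVec, ← mulVec_mulVec, dotProduct_mulVec, ← mulVec_transpose]
  simp [dotProduct, mulVec_diagonal, sq, mul_left_comm]

lemma Matrix.IsHermitian.dotProduct_self_eq_sum {S : Matrix (Fin n) (Fin n) ℝ}
    (hS : S.IsHermitian) (x : Fin n → ℝ) :
    x ⬝ᵥ x = ∑ t, ((hS.eigenvectorUnitary : Matrix (Fin n) (Fin n) ℝ)ᵀ *ᵥ x) t ^ 2 := by
  set U : Matrix (Fin n) (Fin n) ℝ := ↑hS.eigenvectorUnitary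
  have hU : U * Uᵀ = 1 := by
    simpa [U, Matrix.star_eq_conjTranspose] using
      Unitary.mul_star_self_of_mem hS.eigenvectorUnitary.2
  have hx : x ⬝ᵥ x = x ⬝ᵥ ((U * Uᵀ) *ᵥ x) := by rw [hU, one_mulVec]
  rw [hx, ← mulVec_mulVec, dotProduct_mulVec, ← mulVec_transpose]
  simp [dotProduct, sq]

variable (A : Matrix (Fin n) (Fin n) ℝ)

lemma sigma_nonneg (k : ℕ) : 0 ≤ sigma A k := by
  unfold sigma
  set l := (Multiset.map (svals A) univ.val).sort (· ≤ ·)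
  rcases lt_or_ge (n - k) l.length with h | h
  · rw [List.getD_eq_getElem l 0 h]
    have hmem : l[n - k] ∈ Multiset.map (svals A) univ.val := by
      rw [← Multiset.mem_sort (· ≤ ·)]
      exact List.getElem_mem h
    obtain ⟨t, -, ht⟩ := Multiset.mem_map.1 hmem
    rw [← ht]
    exact Real.sqrt_nonneg _
  · rw [List.getD_eq_default l 0 h]

lemma le_sigma_of_le_card {c : ℝ} {N : ℕ} (hN : 0 < N) (hNn : N ≤ n)
    (hcard : N ≤ #{t | c ≤ svals A t}) : c ≤ sigma A N := by
  unfold sigma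
  set l := (Multiset.map (svals A) univ.val).sort (· ≤ ·)
  have hlen : l.length = n := by simp [l]
  have hcount : l.countP (fun x => c ≤ x) = #{t | c ≤ svals A t} := by
    rw [← Multiset.coe_countP, Multiset.sort_eq, Multiset.countP_map]
    rfl
  have := List.le_getD_of_le_countP (l := l) (Multiset.pairwise_sort _ _) hN (by omega)
    (hcount ▸ hcard)
  rwa [hlen] at this

lemma sum_mul_sq_lt_mul_sum_sq {ι : Type*} [Fintype ι] {μ y : ι → ℝ} {c : ℝ} (hy : y ≠ 0)
    (hμ : ∀ t, y t ≠ 0 → μ t < c) : ∑ t, μ t * y t ^ 2 < c * ∑ t, y t ^ 2 := by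
  obtain ⟨t₀, ht₀⟩ := Function.ne_iff.1 hy
  rw [mul_sum]
  refine sum_lt_sum (fun t _ => ?_) ⟨t₀, mem_univ _, ?_⟩
  · by_cases ht : y t = 0
    · simp [ht]
    · exact mul_le_mul_of_nonneg_right (hμ t ht).le (sq_nonneg _)
  · exact mul_lt_mul_of_pos_right (hμ t₀ ht₀) (sq_pos_of_ne_zero ht₀)

/-- The lower half of the Courant–Fischer min-max principle. -/
lemma finrank_le_card_svals_ge {V : Type*} [AddCommGroup V]
    [Module ℝ V] [FiniteDimensional ℝ V] (E : V →ₗ[ℝ] Fin n → ℝ) (hE : Function.Injective E)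
    {c : ℝ} (h : ∀ v, c ^ 2 * (E v ⬝ᵥ E v) ≤ (A *ᵥ E v) ⬝ᵥ (A *ᵥ E v)) :
    Module.finrank ℝ V ≤ #{t | c ≤ svals A t} := by
  have hS : (Aᵀ * A).IsHermitian := by
    simpa [conjTranspose_eq_transpose_of_trivial] using isHermitian_conjTranspose_mul_self A
  set μ := hS.eigenvalues
  set U : Matrix (Fin n) (Fin n) ℝ := ↑hS.eigenvectorUnitary
  set T : Finset (Fin n) := {t | c ^ 2 ≤ μ t}
  have hT : #T ≤ #{t | c ≤ svals A t} := by
    refine card_le_card fun t ht => ?_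
    simp only [T, mem_filter, mem_univ, true_and] at ht ⊢
    exact Real.le_sqrt_of_sq_le ht
  by_contra! hlt
  let f : V →ₗ[ℝ] T → ℝ := LinearMap.funLeft ℝ ℝ Subtype.val ∘ₗ Uᵀ.mulVecLin ∘ₗ E
  obtain ⟨v, hv, hv0⟩ := Submodule.exists_mem_ne_zero_of_ne_bot
    (LinearMap.ker_ne_bot_of_finrank_lt (f := f) (by simpa using hT.trans_lt hlt))
  set y := Uᵀ *ᵥ E v
  have hyT : ∀ t ∈ T, y t = 0 := fun t ht => congrFun hv ⟨t, ht⟩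
  have hnorm : E v ⬝ᵥ E v = ∑ t, y t ^ 2 := hS.dotProduct_self_eq_sum (E v)
  have hy : y ≠ 0 := fun hy0 => hv0 <| (map_eq_zero_iff E hE).1 <|
    dotProduct_self_eq_zero.1 (by simp [hnorm, hy0])
  have hsum := sum_mul_sq_lt_mul_sum_sq (c := c ^ 2) hy fun t ht => by
    by_contra! hct
    exact ht (hyT t (by simpa [T] using hct))
  have hAx : (A *ᵥ E v) ⬝ᵥ (A *ᵥ E v) = ∑ t, μ t * y t ^ 2 := by
    rw [← hS.dotProduct_mulVec_eq_sum, ← mulVec_mulVec, dotProduct_mulVec (E v) Aᵀ,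
      vecMul_transpose]
  have := h v
  rw [hAx, hnorm] at this
  linarith

lemma le_sigma_of_submatrix {N : ℕ} (hN : 0 < N) {r c : Fin N → Fin n} (hr : r.Injective)
    (hc : c.Injective) {γ : ℝ}
    (h : ∀ v, γ ^ 2 * (v ⬝ᵥ v) ≤ (A.submatrix r c *ᵥ v) ⬝ᵥ (A.submatrix r c *ᵥ v)) :
    γ ≤ sigma A N := by
  set E := Function.ExtendByZero.linearMap ℝ c
  have hE : ∀ v, E v ⬝ᵥ E v = v ⬝ᵥ v := fun v =>
    hc.sum_extend_zero v (fun _ x => x * x) fun _ => mul_zero 0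
  have hAE : ∀ v k, (A *ᵥ E v) (r k) = (A.submatrix r c *ᵥ v) k := fun v k =>
    hc.sum_extend_zero v (fun a x => A (r k) a * x) fun _ => mul_zero _
  have hcard := finrank_le_card_svals_ge A E (Function.extend_injective hc 0) fun v => by
    rw [hE]
    refine (h v).trans ?_
    calc (A.submatrix r c *ᵥ v) ⬝ᵥ (A.submatrix r c *ᵥ v)
        = ∑ a ∈ univ.map ⟨r, hr⟩, (A *ᵥ E v) a * (A *ᵥ E v) a := by
          simp [sum_map, hAE, dotProduct]
      _ ≤ (A *ᵥ E v) ⬝ᵥ (A *ᵥ E v) := sum_le_univ_sum_of_nonneg fun a => mul_self_nonneg _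
  rw [Module.finrank_fin_fun] at hcard
  exact le_sigma_of_le_card A hN (by simpa using Fintype.card_le_of_injective c hc) hcard

end SingularValues

/-- The factors of the partial LU decomposition `A = R N + pivotCols * pivotRows` computed by a
run; on the pivot rows, resp. columns, they are the `L` and `U` factors of the pivot block. -/
noncomputable def pivotCols {n : ℕ} (R : ℕ → Matrix (Fin n) (Fin n) ℝ) (i j : ℕ → Fin n) (N : ℕ) :
    Matrix (Fin n) (Fin N) ℝ :=
  of fun a t => R t a (j t) / R t (i t) (j t)

def pivotRows {n : ℕ} (R : ℕ → Matrix (Fin n) (Fin n) ℝ) (i : ℕ → Fin n) (N : ℕ) :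
    Matrix (Fin N) (Fin n) ℝ :=
  of fun t b => R t (i t) b

namespace CrossApproxSeq

variable {n N m k l : ℕ} {A : Matrix (Fin n) (Fin n) ℝ} {R : ℕ → Matrix (Fin n) (Fin n) ℝ}
  {i j : ℕ → Fin n}

lemma pivot_ne_zero (h : CrossApproxSeq A N R i j) (hk : k < N) : R k (i k) (j k) ≠ 0 :=
  (h.2 k hk).1

lemma abs_le_pivot (h : CrossApproxSeq A N R i j) (hk : k < N) (a b : Fin n) :
    |R k a b| ≤ |R k (i k) (j k)| :=
  (h.2 k hk).2.1 a b

lemma succ_eq (h : CrossApproxSeq A N R i j) (hk : k < N) :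
    R (k + 1) = crossStep (R k) (i k) (j k) :=
  (h.2 k hk).2.2

lemma row_eq_zero (h : CrossApproxSeq A N R i j) (hlk : l < k) (hk : k ≤ N) : R k (i l) = 0 := by
  induction k with
  | zero => omega
  | succ k ih =>
    rw [h.succ_eq (by omega)]
    rcases Nat.lt_succ_iff_lt_or_eq.1 hlk with hlk | rfl
    · exact crossStep_row_eq_zero (ih hlk (by omega))
    · exact crossStep_pivot_row (h.pivot_ne_zero (by omega))

lemma col_eq_zero (h : CrossApproxSeq A N R i j) (hlk : l < k) (hk : k ≤ N) (a : Fin n) :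
    R k a (j l) = 0 := by
  induction k generalizing a with
  | zero => omega
  | succ k ih =>
    rw [h.succ_eq (by omega)]
    rcases Nat.lt_succ_iff_lt_or_eq.1 hlk with hlk | rfl
    · exact crossStep_col_eq_zero (ih hlk (by omega)) a
    · exact crossStep_pivot_col (h.pivot_ne_zero (by omega)) a

lemma injective_rows (h : CrossApproxSeq A N R i j) : Function.Injective fun t : Fin N => i t := by
  intro s t hst
  by_contra hne
  rcases lt_or_gt_of_ne (Fin.val_ne_of_ne hne) with hlt | hlt
  · exact h.pivot_ne_zero t.2 (by simpa [hst] using congrFun (h.row_eq_zero hlt t.2.le) (j t))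
  · exact h.pivot_ne_zero s.2 (by simpa [hst] using congrFun (h.row_eq_zero hlt s.2.le) (j s))

lemma injective_cols (h : CrossApproxSeq A N R i j) : Function.Injective fun t : Fin N => j t := by
  intro s t hst
  by_contra hne
  rcases lt_or_gt_of_ne (Fin.val_ne_of_ne hne) with hlt | hlt
  · exact h.pivot_ne_zero t.2 (by simpa [hst] using h.col_eq_zero hlt t.2.le (i t))
  · exact h.pivot_ne_zero s.2 (by simpa [hst] using h.col_eq_zero hlt s.2.le (i s))

lemma apply_eq_add_sum (h : CrossApproxSeq A N R i j) (hk : k ≤ N) (a b : Fin n) :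
    A a b = R k a b + ∑ t ∈ range k, R t a (j t) / R t (i t) (j t) * R t (i t) b := by
  induction k with
  | zero => simp [h.1]
  | succ k ih =>
    rw [sum_range_succ, h.succ_eq (by omega), crossStep_apply, ih (by omega)]
    ring

lemma eq_add_mul (h : CrossApproxSeq A N R i j) :
    A = R N + pivotCols R i j N * pivotRows R i N := by
  ext a b
  rw [h.apply_eq_add_sum le_rfl, Matrix.add_apply, mul_apply,
    ← Fin.sum_univ_eq_sum_range (fun t => R t a (j t) / R t (i t) (j t) * R t (i t) b)]
  rfl

lemma exists_perm_isDominantAt (h : CrossApproxSeq A N R i j) (hA : ∀ a, IsDominantAt (A a) a)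
    (hk : k ≤ N) :
    ∃ σ : Equiv.Perm (Fin n), ∀ a, IsDominantAt (R k a) (σ a) := by
  induction k with
  | zero => exact ⟨1, by simpa [h.1] using hA⟩
  | succ k ih =>
    obtain ⟨σ, hσ⟩ := ih (by omega)
    rw [h.succ_eq (by omega)]
    exact exists_perm_isDominantAt_crossStep hσ (h.pivot_ne_zero (by omega))
      (h.abs_le_pivot (by omega))

lemma isDominantAt_pivot_row (h : CrossApproxSeq A N R i j) (hA : ∀ a, IsDominantAt (A a) a)
    (hk : k < N) : IsDominantAt (R k (i k)) (j k) :=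
  have ⟨_, hσ⟩ := h.exists_perm_isDominantAt hA hk.le
  _root_.isDominantAt_pivot_row hσ (h.abs_le_pivot hk)

lemma sum_abs_le (h : CrossApproxSeq A N R i j) (hA : ∀ a, IsDominantAt (A a) a) (hlk : l ≤ k)
    (hk : k ≤ N) (a : Fin n) : ∑ c, |R k a c| ≤ ∑ c, |R l a c| := by
  induction k, hlk using Nat.le_induction with
  | base => exact le_rfl
  | succ k hlk ih =>
    obtain ⟨σ, hσ⟩ := h.exists_perm_isDominantAt hA (k := k) (by omega)
    rw [h.succ_eq (by omega)]
    exact (sum_abs_crossStep_le hσ (h.pivot_ne_zero (by omega)) (h.abs_le_pivot (by omega)) a).trans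
      (ih (by omega))

lemma abs_pivot_le_two_mul (h : CrossApproxSeq A N R i j) (hA : ∀ a, IsDominantAt (A a) a)
    (hlk : l ≤ k) (hk : k < N) : |R k (i k) (j k)| ≤ 2 * |R l (i l) (j l)| := by
  obtain ⟨σ, hσ⟩ := h.exists_perm_isDominantAt hA (k := l) (by omega)
  calc |R k (i k) (j k)| ≤ ∑ c, |R k (i k) c| :=
        single_le_sum (f := fun c => |R k (i k) c|) (fun c _ => abs_nonneg _) (mem_univ _)
    _ ≤ ∑ c, |R l (i k) c| := h.sum_abs_le hA hlk hk.le _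
    _ ≤ 2 * |R l (i k) (σ (i k))| := (hσ _).sum_abs_le_two_mul
    _ ≤ 2 * |R l (i l) (j l)| := by linarith [h.abs_le_pivot (k := l) (by omega) (i k) (σ (i k))]

lemma isLowerTriangular_pivotCols (h : CrossApproxSeq A N R i j) :
    ((pivotCols R i j N).submatrix (fun t : Fin N => i t) id).IsLowerTriangular := by
  intro s t hst
  have hst' : (s : ℕ) < t := OrderDual.toDual_lt_toDual.1 hst
  simp [pivotCols, congrFun (h.row_eq_zero hst' t.2.le) (j t)]

lemma pivotCols_apply_self (h : CrossApproxSeq A N R i j) (t : Fin N) :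
    pivotCols R i j N (i t) t = 1 :=
  div_self (h.pivot_ne_zero t.2)

lemma abs_pivotCols_le_one (h : CrossApproxSeq A N R i j) (a : Fin n) (t : Fin N) :
    |pivotCols R i j N a t| ≤ 1 := by
  rw [pivotCols, of_apply, abs_div, div_le_one (abs_pos.2 (h.pivot_ne_zero t.2))]
  exact h.abs_le_pivot t.2 _ _

lemma isUpperTriangular_pivotRows (h : CrossApproxSeq A N R i j) :
    ((pivotRows R i N).submatrix id (fun t : Fin N => j t)).IsUpperTriangular := by
  intro s t hts
  exact h.col_eq_zero (Fin.lt_def.1 hts) s.2.le _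

lemma sum_Ioi_abs_pivotRows_le (h : CrossApproxSeq A N R i j) (hA : ∀ a, IsDominantAt (A a) a)
    (s : Fin N) : ∑ t ∈ Ioi s, |pivotRows R i N s (j t)| ≤ |pivotRows R i N s (j s)| := by
  have hsub : (Ioi s).map ⟨_, h.injective_cols⟩ ⊆ univ.erase (j s) := by
    intro c hc
    obtain ⟨t, ht, rfl⟩ := mem_map.1 hc
    exact mem_erase.2 ⟨fun hts => (mem_Ioi.1 ht).ne' (h.injective_cols hts), mem_univ _⟩
  calc ∑ t ∈ Ioi s, |R s (i s) (j t)|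
      = ∑ c ∈ (Ioi s).map ⟨_, h.injective_cols⟩, |R s (i s) c| := by
        rw [sum_map]
        rfl
    _ ≤ ∑ c ∈ univ.erase (j s), |R s (i s) c| :=
      sum_le_sum_of_subset_of_nonneg hsub fun _ _ _ => abs_nonneg _
    _ ≤ |R s (i s) (j s)| := h.isDominantAt_pivot_row hA s.2

lemma submatrix_cols_eq (h : CrossApproxSeq A N R i j) :
    A.submatrix id (fun t : Fin N => j t) =
      pivotCols R i j N * (pivotRows R i N).submatrix id (fun t : Fin N => j t) := by
  ext a t
  rw [submatrix_apply, congrFun₂ h.eq_add_mul, Matrix.add_apply, h.col_eq_zero t.2 le_rfl, zero_add]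
  rfl

lemma submatrix_rows_eq (h : CrossApproxSeq A N R i j) :
    A.submatrix (fun t : Fin N => i t) id =
      (pivotCols R i j N).submatrix (fun t : Fin N => i t) id * pivotRows R i N := by
  ext t b
  rw [submatrix_apply, id_eq, congrFun₂ h.eq_add_mul, Matrix.add_apply,
    congrFun (h.row_eq_zero t.2 le_rfl) b, Pi.zero_apply, zero_add]
  rfl

lemma submatrix_eq_mul (h : CrossApproxSeq A N R i j) :
    A.submatrix (fun t : Fin N => i t) (fun t : Fin N => j t) =
      (pivotCols R i j N).submatrix (fun t : Fin N => i t) id *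
        (pivotRows R i N).submatrix id (fun t : Fin N => j t) := by
  ext s t
  rw [submatrix_apply, congrFun₂ h.eq_add_mul, Matrix.add_apply,
    congrFun (h.row_eq_zero s.2 le_rfl) (j t), Pi.zero_apply, zero_add]
  rfl

lemma isUnit_det_pivotCols (h : CrossApproxSeq A N R i j) :
    IsUnit ((pivotCols R i j N).submatrix (fun t : Fin N => i t) id).det := by
  rw [det_of_isLowerTriangular _ h.isLowerTriangular_pivotCols]
  simp [h.pivotCols_apply_self]

lemma isUnit_det_pivotRows (h : CrossApproxSeq A N R i j) :
    IsUnit ((pivotRows R i N).submatrix id (fun t : Fin N => j t)).det := by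
  rw [det_of_isUpperTriangular h.isUpperTriangular_pivotRows]
  exact (prod_ne_zero_iff.2 fun t _ => h.pivot_ne_zero t.2).isUnit

lemma sub_submatrix_mul_inv_mul_eq (h : CrossApproxSeq A N R i j) :
    A - A.submatrix id (fun t : Fin N => j t.1) *
        (A.submatrix (fun t : Fin N => i t.1) (fun t : Fin N => j t.1))⁻¹ *
        A.submatrix (fun t : Fin N => i t.1) id = R N := by
  rw [h.submatrix_cols_eq, h.submatrix_rows_eq, h.submatrix_eq_mul, Matrix.mul_inv_rev]
  simp only [Matrix.mul_assoc, mul_nonsing_inv_cancel_left _ _ h.isUnit_det_pivotRows,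
    nonsing_inv_mul_cancel_left _ _ h.isUnit_det_pivotCols]
  conv_lhs => rw [h.eq_add_mul]
  abel

lemma abs_submatrix_inv_apply_le (h : CrossApproxSeq A (m + 1) R i j)
    (hA : ∀ a, IsDominantAt (A a) a) (k l : Fin (m + 1)) :
    |(A.submatrix (fun t : Fin (m + 1) => i t) (fun t : Fin (m + 1) => j t))⁻¹ k l| ≤
      2 ^ (m + 1) / |R m (i m) (j m)| := by
  set p := |R m (i m) (j m)|
  set L := (pivotCols R i j (m + 1)).submatrix (fun t : Fin (m + 1) => i t) id
  set U := (pivotRows R i (m + 1)).submatrix id (fun t : Fin (m + 1) => j t)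
  have hp : 0 < p := abs_pos.2 (h.pivot_ne_zero m.lt_succ_self)
  have hU : ∀ t, |U⁻¹ k t| ≤ 2 / p := fun t => by
    refine (h.isUpperTriangular_pivotRows.abs_inv_apply_le (fun s => h.pivot_ne_zero s.2)
      (h.sum_Ioi_abs_pivotRows_le hA) k t).trans ?_
    change |R t (i t) (j t)|⁻¹ ≤ 2 / p
    rw [inv_le_iff_one_le_mul₀ (abs_pos.2 (h.pivot_ne_zero t.2)), ← mul_div_right_comm,
      one_le_div hp]
    exact h.abs_pivot_le_two_mul hA (Nat.lt_succ_iff.1 t.2) m.lt_succ_self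
  have hL := h.isLowerTriangular_pivotCols.sum_abs_inv_apply_le
    (fun t => h.pivotCols_apply_self t) (fun _ _ => h.abs_pivotCols_le_one _ _) l
  rw [h.submatrix_eq_mul, Matrix.mul_inv_rev, mul_apply]
  calc |∑ t, U⁻¹ k t * L⁻¹ t l| ≤ ∑ t, 2 / p * |L⁻¹ t l| := by
        refine (abs_sum_le_sum_abs _ _).trans (sum_le_sum fun t _ => ?_)
        rw [abs_mul]
        exact mul_le_mul_of_nonneg_right (hU t) (abs_nonneg _)
    _ ≤ 2 / p * 2 ^ m := by
        rw [← mul_sum]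
        exact mul_le_mul_of_nonneg_left (by simpa using hL) (by positivity)
    _ = 2 ^ (m + 1) / p := by ring

theorem abs_pivot_le_sigma (h : CrossApproxSeq A (m + 1) R i j)
    (hA : ∀ a, IsDominantAt (A a) a) :
    |R m (i m) (j m)| ≤ (m + 1) * 2 ^ (m + 1) * sigma A (m + 1) := by
  set p := |R m (i m) (j m)|
  have hp : 0 < p := abs_pos.2 (h.pivot_ne_zero m.lt_succ_self)
  have hM : IsUnit (A.submatrix (fun t : Fin (m + 1) => i t) (fun t : Fin (m + 1) => j t)).det := by
    rw [h.submatrix_eq_mul, det_mul]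
    exact h.isUnit_det_pivotCols.mul h.isUnit_det_pivotRows
  set γ := p / ((m + 1) * 2 ^ (m + 1))
  have hγ : γ * (((m + 1 : ℕ) : ℝ) * (2 ^ (m + 1) / p)) = 1 := by
    simp only [γ]
    push_cast
    field_simp
  have hσ : γ ≤ sigma A (m + 1) :=
    le_sigma_of_submatrix A m.succ_pos h.injective_rows h.injective_cols fun v => by
      have hv := dotProduct_self_le_of_abs_inv_le hM (h.abs_submatrix_inv_apply_le hA) v
      calc γ ^ 2 * (v ⬝ᵥ v) ≤ γ ^ 2 * ((((m + 1 : ℕ) : ℝ) * (2 ^ (m + 1) / p)) ^ 2 * _) :=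
            mul_le_mul_of_nonneg_left hv (sq_nonneg γ)
        _ = _ := by rw [← mul_assoc, ← mul_pow, hγ, one_pow, one_mul]
  calc p = (m + 1) * 2 ^ (m + 1) * γ := by
        simp only [γ]
        field_simp
    _ ≤ (m + 1) * 2 ^ (m + 1) * sigma A (m + 1) := by gcongr

lemma snoc (h : CrossApproxSeq A N R i j) {a b : Fin n} (hne : R N a b ≠ 0)
    (hmax : ∀ x y, |R N x y| ≤ |R N a b|) :
    CrossApproxSeq A (N + 1) (Function.update R (N + 1) (crossStep (R N) a b))
      (Function.update i N a) (Function.update j N b) := by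
  refine ⟨by simp [h.1], fun k hk => ?_⟩
  rcases Nat.lt_succ_iff_lt_or_eq.1 hk with hk | rfl
  · rw [Function.update_of_ne (by omega : k ≠ N + 1),
      Function.update_of_ne (by omega : k + 1 ≠ N + 1), Function.update_of_ne hk.ne,
      Function.update_of_ne hk.ne]
    exact h.2 k hk
  · simp [hne, hmax, crossStep]

end CrossApproxSeq

lemma maxNorm_le {n m : ℕ} {E : Matrix (Fin n) (Fin m) ℝ} {p : ℝ} (hp : 0 ≤ p)
    (h : ∀ a b, |E a b| ≤ p) : maxNorm E ≤ p :=
  Real.iSup_le (fun a => Real.iSup_le (h a) hp) hp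

theorem crossApprox_error_bound_diagDominant_general {n m : ℕ}
    (A : Matrix (Fin n) (Fin n) ℝ)
    (hdd : ∀ a : Fin n, ∑ b ∈ Finset.univ.erase a, |A a b| ≤ |A a a|)
    (R : ℕ → Matrix (Fin n) (Fin n) ℝ) (i j : ℕ → Fin n)
    (halg : CrossApproxSeq A m R i j) :
    maxNorm (A -
        A.submatrix id (fun t : Fin m => j t.1) *
          (A.submatrix (fun t : Fin m => i t.1) (fun t : Fin m => j t.1))⁻¹ *
          A.submatrix (fun t : Fin m => i t.1) id) ≤
      (m + 1) * 2 ^ (m + 1) * sigma A (m + 1) := by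
  rw [halg.sub_submatrix_mul_inv_mul_eq]
  rcases eq_or_ne (R m) 0 with hR | hR
  · exact (maxNorm_le le_rfl fun a b => by simp [hR]).trans
      (mul_nonneg (by positivity) (sigma_nonneg A _))
  obtain ⟨a₀, b₀, h₀⟩ : ∃ a b, R m a b ≠ 0 := by simpa [← Matrix.ext_iff] using hR
  obtain ⟨⟨a, b⟩, -, hab⟩ := exists_max_image univ (fun q : Fin n × Fin n => |R m q.1 q.2|)
    ⟨(a₀, b₀), mem_univ _⟩
  have hmax : ∀ x y, |R m x y| ≤ |R m a b| := fun x y => hab (x, y) (mem_univ _)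
  have hne : R m a b ≠ 0 := abs_pos.1 ((abs_pos.2 h₀).trans_le (hmax a₀ b₀))
  refine (maxNorm_le (abs_nonneg _) hmax).trans ?_
  simpa using (halg.snoc hne hmax).abs_pivot_le_sigma hdd

/-- Error bound for cross approximation with complete pivoting on a row
diagonally dominant matrix of rank at least `m`:
`‖A − A(:,J)A(I,J)⁻¹A(I,:)‖_max ≤ (m+1) · 2^(m+1) · σ_{m+1}(A)`. -/
theorem crossApprox_error_bound_diagDominant {n m : ℕ} (hmn : m < n)
    (A : Matrix (Fin n) (Fin n) ℝ)
    (hdd : ∀ a : Fin n, ∑ b ∈ Finset.univ.erase a, |A a b| ≤ |A a a|)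
    (hrank : m ≤ A.rank)
    (R : ℕ → Matrix (Fin n) (Fin n) ℝ) (i j : ℕ → Fin n)
    (halg : CrossApproxSeq A m R i j) :
    maxNorm (A -
        A.submatrix id (fun t : Fin m => j t.1) *
          (A.submatrix (fun t : Fin m => i t.1) (fun t : Fin m => j t.1))⁻¹ *
          A.submatrix (fun t : Fin m => i t.1) id) ≤
      (m + 1) * 2 ^ (m + 1) * sigma A (m + 1) :=
  crossApprox_error_bound_diagDominant_general A hdd R i j halg
end
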